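/- arXiv:1906.05505 — 4 statements merged into one kernel-verified Lean document; each statement's English description precedes it below -/
import Mathlib

section
/- If a finite set S of points in the plane is contained in some closed disk of radius r, then there exists a point a ∈ S and a closed disk D of radius r whose boundary passes through a such that S ⊆ D. -/
abbrev Pt := EuclideanSpace ℝ (Fin 2)

/-! Let `a` be a point of `S` farthest from the center `c`, at distance `d ≤ r`. Moving the
center from `c` straight away from `a` by `r - d` puts `a` on the boundary, and every point of
`S`, being within `d` of `c`, stays within `d + (r - d) = r` of the new center. -/

section

variable {E : Type*} [NormedAddCommGroup E] [NormedSpace ℝ E] [Nontrivial E]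

theorem exists_norm_eq_one_smul_eq (x : E) : ∃ u : E, ‖u‖ = 1 ∧ ‖x‖ • u = x := by
  rcases eq_or_ne x 0 with rfl | hx
  · obtain ⟨u, hu⟩ := exists_norm_eq E zero_le_one
    exact ⟨u, hu, by simp⟩
  · exact ⟨‖x‖⁻¹ • x, norm_smul_inv_norm hx, by simp [smul_smul, norm_ne_zero_iff.mpr hx]⟩

theorem exists_dist_eq_of_dist_le {a c : E} {r : ℝ} (h : dist a c ≤ r) :
    ∃ c' : E, dist a c' = r ∧ dist c c' = r - dist a c := by
  obtain ⟨u, hu, hcu⟩ := exists_norm_eq_one_smul_eq (c - a)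
  have hr : 0 ≤ r := dist_nonneg.trans h
  refine ⟨a + r • u, ?_, ?_⟩
  · simp [dist_eq_norm, norm_smul, hu, abs_of_nonneg hr]
  · have hc : a + r • u - c = (r - dist a c) • u := by
      rw [sub_smul, dist_comm, dist_eq_norm, hcu]
      abel
    rw [dist_comm, dist_eq_norm, hc, norm_smul, hu, mul_one, Real.norm_eq_abs,
      abs_of_nonneg (sub_nonneg.mpr h)]

end

/-- If a finite nonempty set `S` of points in the plane is contained in some closed disk of
radius `r`, then there is a point `a ∈ S` and a closed disk of radius `r` whose boundary
passes through `a` that contains `S`. -/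
theorem stmt0 (S : Finset Pt) (r : ℝ) (hS : S.Nonempty)
    (hcov : ∃ c : Pt, ∀ p ∈ S, dist p c ≤ r) :
    ∃ a ∈ S, ∃ c : Pt, dist a c = r ∧ ∀ p ∈ S, dist p c ≤ r := by
  obtain ⟨c, hc⟩ := hcov
  obtain ⟨a, haS, hfar⟩ := S.exists_max_image (dist · c) hS
  obtain ⟨c', hac', hcc'⟩ := exists_dist_eq_of_dist_le (hc a haS)
  refine ⟨a, haS, c', hac', fun p hp => ?_⟩
  calc dist p c' ≤ dist p c + dist c c' := dist_triangle p c c'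
    _ ≤ r := by linarith [hfar p hp]
end

section
/- Let S be a nonempty finite set of points in ℝ² contained in a closed disk of radius r centered at O. Let a ∈ S be a point maximizing distance to O, and let r' = dist(a, O) ≤ r. If Q is the point on the ray from a through O with dist(a, Q) = r (i.e., Q = a + (r/r')·(O − a) when r' > 0), then every point b ∈ S satisfies dist(b, Q) ≤ r. -/
open AffineMap

/-- `O` lies on the segment from `a` to `Q`, so `dist O Q = r - dist a O`. -/
theorem dist_lineMap_div_dist_le {E : Type*} [NormedAddCommGroup E] [NormedSpace ℝ E]
    {a O b : E} {r : ℝ} (hpos : 0 < dist a O) (hle : dist a O ≤ r) (hb : dist b O ≤ dist a O) :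
    dist b (lineMap a O (r / dist a O)) ≤ r := by
  have hOQ : dist O (lineMap a O (r / dist a O)) = r - dist a O := by
    have hratio : 1 ≤ r / dist a O := (one_le_div hpos).mpr hle
    rw [dist_comm, dist_lineMap_right, Real.norm_eq_abs, abs_of_nonpos (by linarith), neg_sub,
      sub_mul, div_mul_cancel₀ _ hpos.ne', one_mul]
  calc dist b (lineMap a O (r / dist a O))
      ≤ dist b O + dist O (lineMap a O (r / dist a O)) := dist_triangle _ _ _
    _ ≤ r := by linarith

theorem stmt1_general (S : Finset Pt) (O a Q : Pt) (r r' : ℝ)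
    (hr' : r' = dist a O)
    (hmax : ∀ b ∈ S, dist b O ≤ r')
    (hler : r' ≤ r) (hpos : 0 < r')
    (hQ : Q = a + (r / r') • (O - a)) :
    ∀ b ∈ S, dist b Q ≤ r := by
  intro b hb
  subst hr'
  have hQ_lineMap : Q = lineMap a O (r / dist a O) := by
    rw [hQ, lineMap_apply_module', add_comm]
  rw [hQ_lineMap]
  exact dist_lineMap_div_dist_le hpos hler (hmax b hb)

/-- If `a ∈ S` maximizes distance to `O` among points of a set `S` covered by the disk of
radius `r` around `O`, with `r' = dist a O > 0`, and `Q = a + (r/r') • (O - a)`, then every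
`b ∈ S` satisfies `dist b Q ≤ r`. -/
theorem stmt1 (S : Finset Pt) (O a Q : Pt) (r r' : ℝ)
    (hS : S.Nonempty) (ha : a ∈ S)
    (hr' : r' = dist a O)
    (hmax : ∀ b ∈ S, dist b O ≤ r')
    (hler : r' ≤ r) (hpos : 0 < r')
    (hQ : Q = a + (r / r') • (O - a)) :
    ∀ b ∈ S, dist b Q ≤ r :=
  stmt1_general S O a Q r r' hr' hmax hler hpos hQ
end

section
/- Let v be a point in ℝ², r > 0, and A a point with d_A = dist(v, A) satisfying 0 < d_A ≤ 2r. Using v as the pole of a polar coordinate system, let α_A be the angle of A. Then for any angle θ, the point A lies in the closed disk of radius r centered at C(θ) = v + r·(cos θ, sin θ) if and only if θ ∈ [α_A − arccos(d_A/(2r)), α_A + arccos(d_A/(2r))] (modulo 2π). -/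
/-- Unit vector in direction `θ`. -/
noncomputable def dir (θ : ℝ) : Pt := (WithLp.equiv 2 (Fin 2 → ℝ)).symm ![Real.cos θ, Real.sin θ]

/-!
By the law of cosines, `|A - C(θ)|² = d² + r² - 2 d r cos (θ - α)`, so `A` lies in the disk iff
`d / (2r) ≤ cos (θ - α)`. As `cos` is even, `2π`-periodic and strictly decreasing on `[0, π]`, this
holds iff the representative of `θ - α` in `[-π, π]` has absolute value at most `arccos (d / (2r))`.
-/

open Real

lemma inner_dir_dir (α θ : ℝ) : inner ℝ (dir α) (dir θ) = cos (θ - α) := by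
  simp [dir, PiLp.inner_apply, Fin.sum_univ_two, cos_sub]

lemma norm_dir (θ : ℝ) : ‖dir θ‖ = 1 := by
  rw [norm_eq_sqrt_real_inner, inner_dir_dir, sub_self, cos_zero, sqrt_one]

lemma dist_add_smul_dir_sq (v : Pt) (a b α θ : ℝ) :
    dist (v + a • dir α) (v + b • dir θ) ^ 2 = a ^ 2 + b ^ 2 - 2 * a * b * cos (θ - α) := by
  rw [dist_add_left, dist_eq_norm, norm_sub_sq_real, inner_smul_left, inner_smul_right,
    norm_smul, norm_smul, norm_dir, norm_dir, inner_dir_dir]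
  simp only [Real.norm_eq_abs, mul_one, sq_abs, conj_trivial]
  ring

lemma dist_add_smul_dir_le_iff (v : Pt) {a b : ℝ} (ha : 0 < a) (hb : 0 < b) (α θ : ℝ) :
    dist (v + a • dir α) (v + b • dir θ) ≤ b ↔ a / (2 * b) ≤ cos (θ - α) := by
  rw [← sq_le_sq₀ dist_nonneg hb.le, dist_add_smul_dir_sq, div_le_iff₀ (by positivity)]
  constructor <;> intro h <;> nlinarith

lemma le_cos_iff_le_arccos {c y : ℝ} (hc₁ : -1 ≤ c) (hc₂ : c ≤ 1) (hy₀ : 0 ≤ y) (hyπ : y ≤ π) :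
    c ≤ cos y ↔ y ≤ arccos c := by
  conv_lhs => rw [← cos_arccos hc₁ hc₂]
  exact strictAntiOn_cos.le_iff_ge ⟨arccos_nonneg c, arccos_le_pi c⟩ ⟨hy₀, hyπ⟩

lemma exists_int_abs_sub_two_pi_mul_le_pi (x : ℝ) : ∃ k : ℤ, |x - 2 * π * k| ≤ π := by
  refine ⟨round (x / (2 * π)), ?_⟩
  have h2π : 0 < 2 * π := by positivity
  have hx : x - 2 * π * round (x / (2 * π)) = 2 * π * (x / (2 * π) - round (x / (2 * π))) := by
    field_simp
  rw [hx, abs_mul, abs_of_pos h2π]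
  nlinarith [abs_sub_round (x / (2 * π))]

lemma cos_abs_sub_two_pi_mul (x : ℝ) (k : ℤ) : cos |x - 2 * π * k| = cos x := by
  rw [cos_abs, mul_comm, cos_sub_int_mul_two_pi]

lemma le_cos_iff_exists_int_abs_sub_le_arccos {c : ℝ} (hc₁ : -1 ≤ c) (hc₂ : c ≤ 1) (x : ℝ) :
    c ≤ cos x ↔ ∃ k : ℤ, |x - 2 * π * k| ≤ arccos c := by
  constructor
  · intro h
    obtain ⟨k, hk⟩ := exists_int_abs_sub_two_pi_mul_le_pi x
    refine ⟨k, (le_cos_iff_le_arccos hc₁ hc₂ (abs_nonneg _) hk).1 ?_⟩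
    rwa [cos_abs_sub_two_pi_mul]
  · rintro ⟨k, hk⟩
    rw [← cos_abs_sub_two_pi_mul x k]
    exact (le_cos_iff_le_arccos hc₁ hc₂ (abs_nonneg _) (hk.trans (arccos_le_pi c))).2 hk

theorem stmt2_general (v A : Pt) (r d_A α_A : ℝ) (hr : 0 < r)
    (hpos : 0 < d_A) (hle : d_A ≤ 2 * r)
    (hα : A = v + d_A • dir α_A) :
    ∀ θ : ℝ, dist A (v + r • dir θ) ≤ r ↔
      ∃ k : ℤ, |θ - (α_A + 2 * Real.pi * k)| ≤ Real.arccos (d_A / (2 * r)) := by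
  intro θ
  have hc₁ : -1 ≤ d_A / (2 * r) := by linarith [show 0 ≤ d_A / (2 * r) by positivity]
  have hc₂ : d_A / (2 * r) ≤ 1 := (div_le_one (by positivity)).2 hle
  rw [hα, dist_add_smul_dir_le_iff v hpos hr, le_cos_iff_exists_int_abs_sub_le_arccos hc₁ hc₂]
  simp only [sub_sub]

/-- Angular sweep containment: the point `A` (at distance `d_A` and polar angle `α_A` from `v`)
lies in the closed disk of radius `r` centered at `C(θ) = v + r • (cos θ, sin θ)` iff `θ` is
within `arccos (d_A / (2r))` of `α_A` modulo `2π`. -/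
theorem stmt2 (v A : Pt) (r d_A α_A : ℝ) (hr : 0 < r)
    (hdA : d_A = dist v A) (hpos : 0 < d_A) (hle : d_A ≤ 2 * r)
    (hα : A = v + d_A • dir α_A) :
    ∀ θ : ℝ, dist A (v + r • dir θ) ≤ r ↔
      ∃ k : ℤ, |θ - (α_A + 2 * Real.pi * k)| ≤ Real.arccos (d_A / (2 * r)) :=
  stmt2_general v A r d_A α_A hr hpos hle hα
end

section
/- If a finite set S of points in ℝ² has all pairwise Euclidean distances at most d, then S is contained in a closed disk of radius d/√3 (equivalently, diameter 2d/√3); in particular S is contained in a disk of diameter √2·d since 2/√3 ≤ √2. -/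
/-!
Let `c` minimise the largest distance `R` from a point to `S`. If `c` lay outside the convex hull
of the points of `S` at distance exactly `R`, moving `c` slightly towards that hull would bring
every point of `S` strictly closer than `R`. So, by Carathéodory, `c = ∑ wᵢ pᵢ` is a convex
combination of at most `n + 1` such points, `n` being the dimension. The parallel axis identity
`∑ wᵢ ‖pᵢ - q‖² = ∑ wᵢ ‖pᵢ - c‖² + ‖c - q‖²` at `q = pⱼ` gives
`2 R² = ∑_{i ≠ j} wᵢ ‖pᵢ - pⱼ‖² ≤ (1 - wⱼ) d²`, and some `wⱼ ≥ 1 / (n + 1)`, whence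
`R² ≤ n / (2 (n + 1)) · d²`, which is `d² / 3` in the plane.
-/

open Finset Filter Topology Module RealInnerProductSpace

lemma exists_forall_sup'_dist_le {α : Type*} [PseudoMetricSpace α] [ProperSpace α]
    {S : Finset α} (hS : S.Nonempty) :
    ∃ c, ∀ y, S.sup' hS (dist · c) ≤ S.sup' hS (dist · y) := by
  obtain ⟨p, hp⟩ := hS
  have : Nonempty α := ⟨p⟩
  exact Continuous.exists_forall_le
    (Continuous.finset_sup'_apply _ fun q _ => continuous_const.dist continuous_id)
    (tendsto_atTop_mono (fun y => le_sup' (dist · y) hp) (tendsto_dist_left_cocompact_atTop p))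

section InnerProductSpace

variable {E : Type*} [NormedAddCommGroup E] [InnerProductSpace ℝ E]

lemma sum_mul_dist_sq_eq {t : Finset E} {w : E → ℝ} {c : E} (hw₁ : ∑ p ∈ t, w p = 1)
    (hwc : ∑ p ∈ t, w p • p = c) (q : E) :
    ∑ p ∈ t, w p * dist p q ^ 2 = ∑ p ∈ t, w p * dist p c ^ 2 + dist c q ^ 2 := by
  have hcentered : ∑ p ∈ t, w p • (p - c) = 0 := by
    simp only [smul_sub, sum_sub_distrib, hwc, ← sum_smul, hw₁, one_smul, sub_self]
  have hcross : ∑ p ∈ t, w p * (2 * ⟪p - c, c - q⟫) = 0 := by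
    calc ∑ p ∈ t, w p * (2 * ⟪p - c, c - q⟫) = 2 * ⟪∑ p ∈ t, w p • (p - c), c - q⟫ := by
          rw [sum_inner, mul_sum]
          congr! 1 with p
          rw [real_inner_smul_left]
          ring
      _ = 0 := by rw [hcentered, inner_zero_left, mul_zero]
  have hexpand (p : E) : dist p q ^ 2 = dist p c ^ 2 + 2 * ⟪p - c, c - q⟫ + dist c q ^ 2 := by
    simp only [dist_eq_norm]
    rw [← norm_add_sq_real, sub_add_sub_cancel]
  rw [sum_congr rfl fun p _ => congrArg (w p * ·) (hexpand p)]
  simp only [mul_add, sum_add_distrib, hcross, ← sum_mul, hw₁, one_mul, add_zero]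

lemma two_mul_sq_le_of_sum_smul_eq {t : Finset E} {c : E} {r d : ℝ}
    (hr : ∀ p ∈ t, dist p c = r) (hd : ∀ p ∈ t, ∀ q ∈ t, dist p q ≤ d)
    {w : E → ℝ} (hw₀ : ∀ p ∈ t, 0 ≤ w p) (hw₁ : ∑ p ∈ t, w p = 1)
    (hwc : ∑ p ∈ t, w p • p = c) {q : E} (hq : q ∈ t) :
    2 * r ^ 2 ≤ (1 - w q) * d ^ 2 := by
  classical
  calc 2 * r ^ 2 = ∑ p ∈ t, w p * dist p q ^ 2 := by
        rw [sum_mul_dist_sq_eq hw₁ hwc, sum_congr rfl fun p hp => by rw [hr p hp], ← sum_mul,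
          hw₁, dist_comm, hr q hq]
        ring
    _ = ∑ p ∈ t.erase q, w p * dist p q ^ 2 := by
        rw [← add_sum_erase _ _ hq, dist_self]
        ring
    _ ≤ ∑ p ∈ t.erase q, w p * d ^ 2 := by
        gcongr with p hp
        · exact hw₀ p (mem_of_mem_erase hp)
        · exact hd p (mem_of_mem_erase hp) q hq
    _ = (1 - w q) * d ^ 2 := by rw [← sum_mul, sum_erase_eq_sub hq, hw₁]

lemma two_mul_sq_le_of_mem_convexHull {t : Finset E} {c : E} {r d : ℝ}
    (hc : c ∈ convexHull ℝ (t : Set E))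
    (hr : ∀ p ∈ t, dist p c = r) (hd : ∀ p ∈ t, ∀ q ∈ t, dist p q ≤ d) :
    2 * r ^ 2 ≤ (1 - (#t : ℝ)⁻¹) * d ^ 2 := by
  obtain ⟨w, hw₀, hw₁, hwc⟩ := Finset.mem_convexHull'.1 hc
  have ht : t.Nonempty := Finset.coe_nonempty.1 (convexHull_nonempty_iff.1 ⟨c, hc⟩)
  obtain ⟨q, hq, hwq⟩ : ∃ q ∈ t, (#t : ℝ)⁻¹ ≤ w q :=
    exists_le_of_sum_le ht (by simp [hw₁, ht.card_pos.ne'])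
  calc 2 * r ^ 2 ≤ (1 - w q) * d ^ 2 := two_mul_sq_le_of_sum_smul_eq hr hd hw₀ hw₁ hwc hq
    _ ≤ (1 - (#t : ℝ)⁻¹) * d ^ 2 := by gcongr

lemma eventually_dist_add_smul_lt {p c u : E} (h : 0 < ⟪p - c, u⟫) :
    ∀ᶠ s in 𝓝[>] (0 : ℝ), dist p (c + s • u) < dist p c := by
  have hsmall : ∀ᶠ s in 𝓝[>] (0 : ℝ), s * ‖u‖ ^ 2 < 2 * ⟪p - c, u⟫ :=
    (((continuous_mul_const _).tendsto' 0 0 (zero_mul _)).mono_left nhdsWithin_le_nhds).eventually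
      (gt_mem_nhds (by linarith))
  filter_upwards [hsmall, self_mem_nhdsWithin] with s hs (hs₀ : 0 < s)
  have hexpand : dist p (c + s • u) ^ 2 = dist p c ^ 2 - s * (2 * ⟪p - c, u⟫ - s * ‖u‖ ^ 2) := by
    rw [dist_eq_norm, dist_eq_norm, ← sub_sub, norm_sub_sq_real, real_inner_smul_right, norm_smul,
      Real.norm_eq_abs, abs_of_pos hs₀]
    ring
  refine lt_of_pow_lt_pow_left₀ 2 dist_nonneg ?_
  rw [hexpand]
  linarith [mul_pos hs₀ (sub_pos.2 hs)]

lemma mem_convexHull_of_forall_sup'_dist_le [CompleteSpace E] {S : Finset E} (hS : S.Nonempty)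
    {c : E} (hc : ∀ y, S.sup' hS (dist · c) ≤ S.sup' hS (dist · y)) :
    c ∈ convexHull ℝ (↑({p ∈ S | dist p c = S.sup' hS (dist · c)} : Finset E) : Set E) := by
  set R := S.sup' hS (dist · c)
  set T := {p ∈ S | dist p c = R}
  by_contra hcT
  obtain ⟨f, a, hfc, hfT⟩ := geometric_hahn_banach_point_closed (convex_convexHull ℝ _)
    (T.finite_toSet.isClosed_convexHull ℝ) hcT
  -- the Riesz representative of the separating functional points from `c` towards the hull
  set u := (InnerProductSpace.toDual ℝ E).symm f
  have hu (p : E) (hp : p ∈ T) : 0 < ⟪p - c, u⟫ := by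
    rw [inner_sub_left, real_inner_comm, InnerProductSpace.toDual_symm_apply, real_inner_comm,
      InnerProductSpace.toDual_symm_apply]
    linarith [hfT p (subset_convexHull ℝ _ hp)]
  have hnear : ∀ p ∈ S, ∀ᶠ s in 𝓝[>] (0 : ℝ), dist p (c + s • u) < R := by
    intro p hp
    rcases (le_sup' (dist · c) hp).lt_or_eq with hlt | heq
    · have hcont : Tendsto (fun s : ℝ => dist p (c + s • u)) (𝓝 0) (𝓝 (dist p c)) := by
        simpa using (show Continuous fun s : ℝ => dist p (c + s • u) by fun_prop).tendsto 0
      exact (hcont.eventually (gt_mem_nhds hlt)).filter_mono nhdsWithin_le_nhds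
    · have := eventually_dist_add_smul_lt (hu p (mem_filter.2 ⟨hp, heq⟩))
      rwa [heq] at this
  obtain ⟨s, hs⟩ := ((eventually_all_finset S).2 hnear).exists
  exact (hc (c + s • u)).not_gt ((sup'_lt_iff hS).2 hs)

theorem exists_two_mul_dist_sq_le [FiniteDimensional ℝ E] (S : Finset E) {d : ℝ}
    (hd : ∀ p ∈ S, ∀ q ∈ S, dist p q ≤ d) :
    ∃ c : E, ∀ p ∈ S, 2 * dist p c ^ 2 ≤ (1 - ((finrank ℝ E : ℝ) + 1)⁻¹) * d ^ 2 := by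
  rcases S.eq_empty_or_nonempty with rfl | hS
  · exact ⟨0, by simp⟩
  obtain ⟨c, hc⟩ := exists_forall_sup'_dist_le hS
  have hcT := mem_convexHull_of_forall_sup'_dist_le hS hc
  rw [convexHull_eq_union] at hcT
  simp only [Set.mem_iUnion] at hcT
  obtain ⟨t, htT, hind, hct⟩ := hcT
  have hcard : (#t : ℝ) ≤ finrank ℝ E + 1 := by
    have := hind.card_le_finrank_succ
    rw [Fintype.card_coe] at this
    exact_mod_cast this.trans (Nat.add_le_add_right (Submodule.finrank_le _) 1)
  have ht : t.Nonempty := Finset.coe_nonempty.1 (convexHull_nonempty_iff.1 ⟨c, hct⟩)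
  have hR := two_mul_sq_le_of_mem_convexHull hct (fun p hp => (mem_filter.1 (htT hp)).2)
    (fun p hp q hq => hd p (mem_filter.1 (htT hp)).1 q (mem_filter.1 (htT hq)).1)
  refine ⟨c, fun p hp => ?_⟩
  calc 2 * dist p c ^ 2 ≤ 2 * S.sup' hS (dist · c) ^ 2 := by
        gcongr
        exact le_sup' (dist · c) hp
    _ ≤ (1 - (#t : ℝ)⁻¹) * d ^ 2 := hR
    _ ≤ (1 - ((finrank ℝ E : ℝ) + 1)⁻¹) * d ^ 2 := by gcongr

end InnerProductSpace

lemma div_sqrt_three_le_sqrt_two_mul_div_two {d : ℝ} (hd : 0 ≤ d) :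
    d / Real.sqrt 3 ≤ Real.sqrt 2 * d / 2 := by
  rw [div_eq_mul_inv, mul_div_right_comm, mul_comm, Real.sqrt_div_self]
  gcongr
  norm_num

/-- Jung's theorem in the plane: if a finite set `S` has all pairwise distances at most `d`,
then `S` is contained in a closed disk of radius `d / √3`; in particular it is contained in a
disk of diameter `√2 * d` (radius `√2 * d / 2`). -/
theorem stmt17 (S : Finset Pt) (d : ℝ)
    (hpair : ∀ p ∈ S, ∀ q ∈ S, dist p q ≤ d) :
    (∃ c : Pt, ∀ p ∈ S, dist p c ≤ d / Real.sqrt 3) ∧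
    (∃ c : Pt, ∀ p ∈ S, dist p c ≤ Real.sqrt 2 * d / 2) := by
  obtain ⟨c, hc⟩ := exists_two_mul_dist_sq_le S hpair
  rw [finrank_euclideanSpace_fin] at hc
  have hd (p : Pt) (hp : p ∈ S) : 0 ≤ d := dist_nonneg.trans (hpair p hp p hp)
  have hjung (p : Pt) (hp : p ∈ S) : dist p c ≤ d / Real.sqrt 3 := by
    refine (le_div_iff₀ (by positivity)).2 <|
      (pow_le_pow_iff_left₀ (by positivity) (hd p hp) two_ne_zero).1 ?_
    rw [mul_pow, Real.sq_sqrt zero_le_three]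
    have h := hc p hp
    norm_num at h
    linarith
  exact ⟨⟨c, hjung⟩,
    ⟨c, fun p hp => (hjung p hp).trans (div_sqrt_three_le_sqrt_two_mul_div_two (hd p hp))⟩⟩
end
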